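/- arXiv:2106.04469 — 7 statements merged into one kernel-verified Lean document; each statement's English description precedes it below -/
import Mathlib

section
/- Descent lemma for the x-iterates of ADOM+: suppose τ₂ = √(μ/L), τ₁ = (1/τ₂ + 1/2)^{-1}, η = 1/(Lτ₂), α = μ/2, and vectors x^k, x_f^k, x_g^k, x^{k+1}, x_f^{k+1}, y^{k+1} ∈ E satisfy x_g^k = τ₁ x^k + (1 − τ₁) x_f^k, x^{k+1} = x^k + ηα(x_g^k − x^{k+1}) − η(∇F(x_g^k) − ν x_g^k − y^{k+1}), and x_f^{k+1} = x_g^k + τ₂(x^{k+1} − x^k). Let Ψ_x^k = (1/η + α)‖x^k − x*‖² + (2/τ₂)(D_F(x_f^k, x*) − (ν/2)‖x_f^k − x*‖²) and define Ψ_x^{k+1} analogously with x^{k+1}, x_f^{k+1}. Then Ψ_x^{k+1} ≤ (1 − √μ/(√μ + 2√L)) Ψ_x^k + 2⟨y^{k+1} − y*, x^{k+1} − x*⟩ − (D_F(x_g^k, x*) − (ν/2)‖x_g^k − x*‖²). -/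
open scoped InnerProductSpace BigOperators

noncomputable section

/-- The product space `E = (ℝ^d)^n` with inner product `⟨x, y⟩ = ∑ᵢ ⟨xᵢ, yᵢ⟩`. -/
abbrev E (n d : ℕ) : Type := PiLp 2 (fun _ : Fin n => EuclideanSpace ℝ (Fin d))

/-- The orthogonal projection `P` onto `L_c^⊥ = {z : ∑ᵢ zᵢ = 0}`:
`(Px)ᵢ = xᵢ − (1/n) ∑ⱼ xⱼ`. -/
def projP {n d : ℕ} (x : E n d) : E n d := WithLp.toLp 2 (fun i => x i - (n : ℝ)⁻¹ • ∑ j, x j)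

/-- `W : E → E` is a gossip map with parameter `χ`: it is given by an `n × n` matrix acting
blockwise (i.e. `W = W̃ ⊗ I_d`), it vanishes on the consensus space `L_c`, its range lies in
`L_c^⊥`, and `‖Wv − v‖² ≤ (1 − χ⁻¹)‖v‖²` for all `v ∈ L_c^⊥`. -/
def IsGossip {n d : ℕ} (χ : ℝ) (W : E n d → E n d) : Prop :=
  (∃ Wt : Matrix (Fin n) (Fin n) ℝ, ∀ (v : E n d) (i : Fin n), W v i = ∑ j, Wt i j • v j) ∧
  (∀ v : E n d, (∀ i j : Fin n, v i = v j) → W v = 0) ∧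
  (∀ v : E n d, ∑ i, W v i = 0) ∧
  (∀ v : E n d, ∑ i, v i = 0 → ‖W v - v‖ ^ 2 ≤ (1 - χ⁻¹) * ‖v‖ ^ 2)

/-- Bregman divergence `D_F(x, y) = F(x) − F(y) − ⟨∇F(y), x − y⟩` (here `G = ∇F`). -/
def DF {n d : ℕ} (F : E n d → ℝ) (G : E n d → E n d) (x y : E n d) : ℝ :=
  F x - F y - ⟪G y, x - y⟫_ℝ

/-- Primal Lyapunov function
`Ψ_x = (1/η + α)‖x − x*‖² + (2/τ₂)(D_F(x_f, x*) − (ν/2)‖x_f − x*‖²)`. -/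
def PsiX {n d : ℕ} (F : E n d → ℝ) (G : E n d → E n d) (η α τ₂ ν : ℝ)
    (xs xk xfk : E n d) : ℝ :=
  (1 / η + α) * ‖xk - xs‖ ^ 2 + (2 / τ₂) * (DF F G xfk xs - (ν / 2) * ‖xfk - xs‖ ^ 2)

/-- Dual Lyapunov function `Ψ_yz` (with `ẑ = z − P m`):
`(1/θ + β/2)‖y − y*‖² + (β/(2σ₂))‖y_f − y*‖² + (1/γ)‖ẑ − z*‖² + (4/(3γ))‖m‖_P²
  + (1/(νσ₂))‖y_f + z_f − (y* + z*)‖²`. -/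
def PsiYZ {n d : ℕ} (θ β σ₂ γ ν : ℝ) (ys zs yk yfk zk zfk mk : E n d) : ℝ :=
  (1 / θ + β / 2) * ‖yk - ys‖ ^ 2 + (β / (2 * σ₂)) * ‖yfk - ys‖ ^ 2
    + (1 / γ) * ‖zk - projP mk - zs‖ ^ 2 + (4 / (3 * γ)) * ‖projP mk‖ ^ 2
    + (1 / (ν * σ₂)) * ‖yfk + zfk - (ys + zs)‖ ^ 2

/-! The Lyapunov argument runs on `Φ(x) = D_F(x, x*) − (ν/2)‖x − x*‖²`, the Bregman divergence
at `x*` of the `(μ − ν)`-strongly convex, `(L − ν)`-smooth function `F − (ν/2)‖·‖²`, whose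
gradient at `x_g` is `h = ∇F(x_g) − ∇F(x*) − ν(x_g − x*)`. By the optimality condition the
`x`-update is an implicit gradient step along `h − (y^{k+1} − y*)`, so the three-point identity
expresses `‖x^{k+1} − x*‖²` through `⟨h, x^{k+1} − x*⟩`. Splitting
`x^{k+1} − x* = (x^{k+1} − x^k) − (x_g − x^k) − (x* − x_g)` and using
`x_f^{k+1} − x_g = τ₂(x^{k+1} − x^k)`, `x_g − x^k = (1/τ₂ − 1/2)(x_f^k − x_g)`, each piece is
bounded by a difference of values of `Φ` (smoothness for the first, convexity for the other two).
With `τ₂ = √(μ/L)` the resulting coefficients contract by `1 − √μ/(√μ + 2√L)`. -/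

section Bregman

variable {V : Type*} [NormedAddCommGroup V] [InnerProductSpace ℝ V]

def bregman (F : V → ℝ) (G : V → V) (x y : V) : ℝ := F x - F y - ⟪G y, x - y⟫_ℝ

def shiftedBregman (F : V → ℝ) (G : V → V) (ν : ℝ) (xs x : V) : ℝ :=
  bregman F G x xs - ν / 2 * ‖x - xs‖ ^ 2

def shiftedGrad (G : V → V) (ν : ℝ) (xs x : V) : V := G x - G xs - ν • (x - xs)

variable {F : V → ℝ} {G : V → V} {μ L ν : ℝ} {xs x w : V}

@[simp]
theorem shiftedBregman_self : shiftedBregman F G ν xs xs = 0 := by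
  simp [shiftedBregman, bregman]

theorem shiftedBregman_sub_sub_inner_shiftedGrad (F : V → ℝ) (G : V → V) (ν : ℝ) (xs x w : V) :
    shiftedBregman F G ν xs w - shiftedBregman F G ν xs x - ⟪shiftedGrad G ν xs x, w - x⟫_ℝ
      = bregman F G w x - ν / 2 * ‖w - x‖ ^ 2 := by
  have hsplit : ‖w - xs‖ ^ 2 = ‖x - xs‖ ^ 2 + 2 * ⟪x - xs, w - x⟫_ℝ + ‖w - x‖ ^ 2 := by
    rw [← norm_add_sq_real, sub_add_sub_cancel']
  simp only [shiftedBregman, bregman, shiftedGrad, hsplit, inner_sub_left, inner_sub_right,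
    real_inner_smul_left]
  ring

theorem inner_shiftedGrad_le (hstrong : μ / 2 * ‖w - x‖ ^ 2 ≤ bregman F G w x) :
    ⟪shiftedGrad G ν xs x, w - x⟫_ℝ ≤
      shiftedBregman F G ν xs w - shiftedBregman F G ν xs x - (μ - ν) / 2 * ‖w - x‖ ^ 2 := by
  linarith [shiftedBregman_sub_sub_inner_shiftedGrad F G ν xs x w]

theorem le_inner_shiftedGrad (hsmooth : bregman F G w x ≤ L / 2 * ‖w - x‖ ^ 2) :
    shiftedBregman F G ν xs w - shiftedBregman F G ν xs x - (L - ν) / 2 * ‖w - x‖ ^ 2 ≤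
      ⟪shiftedGrad G ν xs x, w - x⟫_ℝ := by
  linarith [shiftedBregman_sub_sub_inner_shiftedGrad F G ν xs x w]

theorem shiftedBregman_nonneg (hstrong : μ / 2 * ‖x - xs‖ ^ 2 ≤ bregman F G x xs) (hν : ν ≤ μ) :
    0 ≤ shiftedBregman F G ν xs x := by
  have : 0 ≤ (μ - ν) / 2 * ‖x - xs‖ ^ 2 := by have := sub_nonneg.2 hν; positivity
  unfold shiftedBregman
  linarith

end Bregman

section Descent

variable {V : Type*} [NormedAddCommGroup V] [InnerProductSpace ℝ V]
  {F : V → ℝ} {G : V → V} {μ L ν τ₁ τ₂ η α : ℝ} {xs ys xk xfk xgk xk1 xfk1 yk1 : V}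

theorem norm_sq_eq_of_implicit_step (hη : η ≠ 0) {a b c g : V}
    (hstep : b - a = (η * α) • (c - b) - η • g) :
    (1 / η + α) * ‖b‖ ^ 2 =
      1 / η * ‖a‖ ^ 2 - 1 / η * ‖b - a‖ ^ 2 + α * ‖c‖ ^ 2 - α * ‖c - b‖ ^ 2 - 2 * ⟪g, b⟫_ℝ := by
  have hinner : ⟪b - a, b⟫_ℝ = η * α * ⟪c - b, b⟫_ℝ - η * ⟪g, b⟫_ℝ := by
    rw [hstep, inner_sub_left, real_inner_smul_left, real_inner_smul_left]
  have hba : ‖b - a‖ ^ 2 = ‖b‖ ^ 2 - 2 * ⟪a, b⟫_ℝ + ‖a‖ ^ 2 := by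
    rw [norm_sub_sq_real, real_inner_comm]
  have hcb : ‖c - b‖ ^ 2 = ‖c‖ ^ 2 - 2 * ⟪c, b⟫_ℝ + ‖b‖ ^ 2 := norm_sub_sq_real c b
  rw [inner_sub_left, inner_sub_left, real_inner_self_eq_norm_sq] at hinner
  rw [hba, hcb]
  field_simp
  linear_combination 2 * hinner

theorem sub_eq_smul_sub_of_eq_smul_add_smul {τ : ℝ} (hτ : τ ≠ 0) {x xf xg : V}
    (hxg : xg = τ • x + (1 - τ) • xf) : xg - x = (τ⁻¹ - 1) • (xf - xg) := by
  subst hxg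
  rw [show xf - (τ • x + (1 - τ) • xf) = τ • (xf - x) by module, smul_smul, sub_mul,
    inv_mul_cancel₀ hτ]
  module

theorem shiftedBregman_descent
    (hstrong : ∀ x y, μ / 2 * ‖x - y‖ ^ 2 ≤ bregman F G x y)
    (hsmooth : ∀ x y, bregman F G x y ≤ L / 2 * ‖x - y‖ ^ 2)
    (hα : 0 ≤ α) (hαμ : α ≤ μ - ν) (hτ₂ : 0 < τ₂) (hτ₂_le : τ₂ ≤ 2) (hη : 0 < η)
    (hηL : (L - ν) * τ₂ ≤ 1 / η) (hτ₁ : τ₁ = (1 / τ₂ + 1 / 2)⁻¹)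
    (hopt : G xs - ν • xs - ys = 0)
    (hxg : xgk = τ₁ • xk + (1 - τ₁) • xfk)
    (hxup : xk1 = xk + (η * α) • (xgk - xk1) - η • (G xgk - ν • xgk - yk1))
    (hxf : xfk1 = xgk + τ₂ • (xk1 - xk)) :
    (1 / η + α) * ‖xk1 - xs‖ ^ 2 + 2 / τ₂ * shiftedBregman F G ν xs xfk1 ≤
      1 / η * ‖xk - xs‖ ^ 2 + (2 / τ₂ - 1) * shiftedBregman F G ν xs xfk
        - shiftedBregman F G ν xs xgk + 2 * ⟪yk1 - ys, xk1 - xs⟫_ℝ := by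
  set Φ := shiftedBregman F G ν xs
  set h := shiftedGrad G ν xs xgk
  have hstep : (xk1 - xs) - (xk - xs) =
      (η * α) • ((xgk - xs) - (xk1 - xs)) - η • (h - (yk1 - ys)) := by
    simp only [h, shiftedGrad]
    linear_combination (norm := module) hxup - η • hopt
  have hnorm := norm_sq_eq_of_implicit_step hη.ne' hstep
  simp only [sub_sub_sub_cancel_right] at hnorm
  rw [inner_sub_left h (yk1 - ys)] at hnorm
  have hsplit : ⟪h, xk1 - xs⟫_ℝ = ⟪h, xk1 - xk⟫_ℝ - ⟪h, xgk - xk⟫_ℝ - ⟪h, xs - xgk⟫_ℝ := by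
    rw [← inner_sub_right, ← inner_sub_right]
    congr 1
    abel
  have hbound_opt : ⟪h, xs - xgk⟫_ℝ ≤ -Φ xgk - (μ - ν) / 2 * ‖xgk - xs‖ ^ 2 := by
    have := inner_shiftedGrad_le (ν := ν) (xs := xs) (hstrong xs xgk)
    rwa [shiftedBregman_self, zero_sub, norm_sub_rev] at this
  have hcoupling : xgk - xk = (1 / τ₂ - 1 / 2) • (xfk - xgk) := by
    have hτ₁0 : τ₁ ≠ 0 := by rw [hτ₁]; positivity
    rw [sub_eq_smul_sub_of_eq_smul_add_smul hτ₁0 hxg, hτ₁, inv_inv]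
    congr 1
    ring
  have hbound_xf : 2 * ⟪h, xgk - xk⟫_ℝ ≤ (2 / τ₂ - 1) * (Φ xfk - Φ xgk) := by
    have hc : 0 ≤ 2 / τ₂ - 1 := by
      rw [sub_nonneg, le_div_iff₀ hτ₂]
      linarith
    have hconv := inner_shiftedGrad_le (ν := ν) (xs := xs) (hstrong xfk xgk)
    have hquad : 0 ≤ (μ - ν) / 2 * ‖xfk - xgk‖ ^ 2 := by
      have := hα.trans hαμ
      positivity
    rw [hcoupling, real_inner_smul_right, ← mul_assoc,
      show 2 * (1 / τ₂ - 1 / 2) = 2 / τ₂ - 1 by ring]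
    exact mul_le_mul_of_nonneg_left (by linarith) hc
  have hbound_xf1 : 2 / τ₂ * (Φ xfk1 - Φ xgk) - 1 / η * ‖xk1 - xk‖ ^ 2 ≤ 2 * ⟪h, xk1 - xk⟫_ℝ := by
    have hsm := le_inner_shiftedGrad (ν := ν) (xs := xs) (hsmooth xfk1 xgk)
    rw [show xfk1 - xgk = τ₂ • (xk1 - xk) by rw [hxf]; abel, real_inner_smul_right, norm_smul,
      mul_pow, Real.norm_eq_abs, sq_abs] at hsm
    calc 2 / τ₂ * (Φ xfk1 - Φ xgk) - 1 / η * ‖xk1 - xk‖ ^ 2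
        ≤ 2 / τ₂ * (Φ xfk1 - Φ xgk) - (L - ν) * τ₂ * ‖xk1 - xk‖ ^ 2 := by gcongr
      _ = 2 / τ₂ * (Φ xfk1 - Φ xgk - (L - ν) / 2 * (τ₂ ^ 2 * ‖xk1 - xk‖ ^ 2)) := by
        field_simp
      _ ≤ 2 / τ₂ * (τ₂ * ⟪h, xk1 - xk⟫_ℝ) := by gcongr
      _ = 2 * ⟪h, xk1 - xk⟫_ℝ := by field_simp
  have hα_opt : α * ‖xgk - xs‖ ^ 2 ≤ (μ - ν) * ‖xgk - xs‖ ^ 2 := by gcongr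
  have hα_step : 0 ≤ α * ‖xgk - xk1‖ ^ 2 := by positivity
  linarith

end Descent

section Rate

variable {μ L : ℝ}

theorem mul_sqrt_div_eq_rate_mul (hμ : 0 < μ) (hL : 0 < L) :
    L * √(μ / L) = (1 - √μ / (√μ + 2 * √L)) * (L * √(μ / L) + μ / 2) := by
  have hs := Real.sqrt_pos.2 hμ
  have ht := Real.sqrt_pos.2 hL
  rw [Real.sqrt_div hμ.le, ← Real.sq_sqrt hμ.le, ← Real.sq_sqrt hL.le, Real.sqrt_sq hs.le,
    Real.sqrt_sq ht.le]
  field_simp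
  ring

theorem two_div_sqrt_div_sub_one_le_rate_mul (hμ : 0 < μ) (hL : 0 < L) :
    2 / √(μ / L) - 1 ≤ (1 - √μ / (√μ + 2 * √L)) * (2 / √(μ / L)) := by
  have hs := Real.sqrt_pos.2 hμ
  have ht := Real.sqrt_pos.2 hL
  rw [Real.sqrt_div hμ.le, div_div_eq_mul_div, one_sub_div (by positivity), ← sub_nonneg]
  field_simp
  ring_nf
  positivity

end Rate

theorem PsiX_eq_shiftedBregman {n d : ℕ} (F : E n d → ℝ) (G : E n d → E n d)
    (η α τ₂ ν : ℝ) (xs x xf : E n d) :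
    PsiX F G η α τ₂ ν xs x xf =
      (1 / η + α) * ‖x - xs‖ ^ 2 + 2 / τ₂ * shiftedBregman F G ν xs xf := rfl

theorem DF_sub_eq_shiftedBregman {n d : ℕ} (F : E n d → ℝ) (G : E n d → E n d)
    (ν : ℝ) (xs x : E n d) :
    DF F G x xs - ν / 2 * ‖x - xs‖ ^ 2 = shiftedBregman F G ν xs x := rfl

theorem adom_plus_x_descent_general
    {n d : ℕ}
    (μ L : ℝ) (hμ : 0 < μ) (hμL : μ ≤ L)
    (ν τ₂ τ₁ η α : ℝ)
    (hν : ν = μ / 2) (hτ₂ : τ₂ = Real.sqrt (μ / L)) (hτ₁ : τ₁ = (1 / τ₂ + 1 / 2)⁻¹)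
    (hη : η = 1 / (L * τ₂)) (hα : α = μ / 2)
    (F : E n d → ℝ) (G : E n d → E n d)
    (hsmooth : ∀ x y : E n d,
      F x ≤ F y + ⟪G y, x - y⟫_ℝ + (L / 2) * ‖x - y‖ ^ 2)
    (hstrong : ∀ x y : E n d,
      F y + ⟪G y, x - y⟫_ℝ + (μ / 2) * ‖x - y‖ ^ 2 ≤ F x)
    (xs ys : E n d) (hopt1 : G xs - ν • xs - ys = 0)
    (xk xfk xgk xk1 xfk1 yk1 : E n d)
    (hxg : xgk = τ₁ • xk + (1 - τ₁) • xfk)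
    (hxup : xk1 = xk + (η * α) • (xgk - xk1) - η • (G xgk - ν • xgk - yk1))
    (hxf : xfk1 = xgk + τ₂ • (xk1 - xk)) :
    PsiX F G η α τ₂ ν xs xk1 xfk1 ≤
      (1 - Real.sqrt μ / (Real.sqrt μ + 2 * Real.sqrt L)) * PsiX F G η α τ₂ ν xs xk xfk
        + 2 * ⟪yk1 - ys, xk1 - xs⟫_ℝ
        - (DF F G xgk xs - (ν / 2) * ‖xgk - xs‖ ^ 2) := by
  subst hν hα
  have hL : 0 < L := hμ.trans_le hμL
  have hτ₂_pos : 0 < τ₂ := by rw [hτ₂]; positivity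
  have hτ₂_le : τ₂ ≤ 1 := by rw [hτ₂]; exact Real.sqrt_le_one.mpr ((div_le_one hL).2 hμL)
  have hη_inv : 1 / η = L * τ₂ := by rw [hη, one_div_one_div]
  have hstrong' : ∀ x y, μ / 2 * ‖x - y‖ ^ 2 ≤ bregman F G x y := fun x y => by
    unfold bregman; linarith [hstrong x y]
  have hsmooth' : ∀ x y, bregman F G x y ≤ L / 2 * ‖x - y‖ ^ 2 := fun x y => by
    unfold bregman; linarith [hsmooth x y]
  have hdescent := shiftedBregman_descent hstrong' hsmooth' (by positivity) (by linarith)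
    hτ₂_pos (by linarith) (by rw [hη]; positivity)
    (by rw [hη_inv]; linarith [mul_pos hμ hτ₂_pos]) hτ₁ hopt1 hxg hxup hxf
  have hΦ_nonneg := shiftedBregman_nonneg (hstrong' xfk xs) (by linarith : μ / 2 ≤ μ)
  have hrate := mul_sqrt_div_eq_rate_mul hμ hL
  have hrate' := mul_le_mul_of_nonneg_right (two_div_sqrt_div_sub_one_le_rate_mul hμ hL) hΦ_nonneg
  rw [PsiX_eq_shiftedBregman, PsiX_eq_shiftedBregman, DF_sub_eq_shiftedBregman]
  rw [hη_inv] at hdescent ⊢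
  rw [← hτ₂] at hrate hrate'
  linear_combination hdescent + hrate' + ‖xk - xs‖ ^ 2 * hrate

/-- **Descent lemma for the x-iterates of ADOM+.**
With `τ₂ = √(μ/L)`, `τ₁ = (1/τ₂ + 1/2)⁻¹`, `η = 1/(Lτ₂)`, `α = μ/2`, under the `x`-update
relations of ADOM+:
`Ψ_x^{k+1} ≤ (1 − √μ/(√μ + 2√L)) Ψ_x^k + 2⟨y^{k+1} − y*, x^{k+1} − x*⟩
  − (D_F(x_g^k, x*) − (ν/2)‖x_g^k − x*‖²)`. -/
theorem adom_plus_x_descent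
    {n d : ℕ} (hn : 1 ≤ n) (hd : 1 ≤ d)
    (μ L : ℝ) (hμ : 0 < μ) (hμL : μ ≤ L)
    (ν τ₂ τ₁ η α : ℝ)
    (hν : ν = μ / 2) (hτ₂ : τ₂ = Real.sqrt (μ / L)) (hτ₁ : τ₁ = (1 / τ₂ + 1 / 2)⁻¹)
    (hη : η = 1 / (L * τ₂)) (hα : α = μ / 2)
    (F : E n d → ℝ) (G : E n d → E n d)
    (hgrad : ∀ x, HasGradientAt F (G x) x)
    (hsmooth : ∀ x y : E n d,
      F x ≤ F y + ⟪G y, x - y⟫_ℝ + (L / 2) * ‖x - y‖ ^ 2)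
    (hstrong : ∀ x y : E n d,
      F y + ⟪G y, x - y⟫_ℝ + (μ / 2) * ‖x - y‖ ^ 2 ≤ F x)
    (xs ys : E n d) (hopt1 : G xs - ν • xs - ys = 0)
    (xk xfk xgk xk1 xfk1 yk1 : E n d)
    (hxg : xgk = τ₁ • xk + (1 - τ₁) • xfk)
    (hxup : xk1 = xk + (η * α) • (xgk - xk1) - η • (G xgk - ν • xgk - yk1))
    (hxf : xfk1 = xgk + τ₂ • (xk1 - xk)) :
    PsiX F G η α τ₂ ν xs xk1 xfk1 ≤
      (1 - Real.sqrt μ / (Real.sqrt μ + 2 * Real.sqrt L)) * PsiX F G η α τ₂ ν xs xk xfk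
        + 2 * ⟪yk1 - ys, xk1 - xs⟫_ℝ
        - (DF F G xgk xs - (ν / 2) * ‖xgk - xs‖ ^ 2) :=
  adom_plus_x_descent_general μ L hμ hμL ν τ₂ τ₁ η α hν hτ₂ hτ₁ hη hα F G hsmooth hstrong xs ys
    hopt1 xk xfk xgk xk1 xfk1 yk1 hxg hxup hxf
end
end

section
/- Descent lemma for the y-iterates of ADOM+: suppose β = 1/(2L), θ > 0, 0 < σ₂ ≤ 2, σ₁ = (1/σ₂ + 1/2)^{-1}, and vectors y^k, y_f^k, y_g^k, y^{k+1}, y_f^{k+1}, x_g^k, x^{k+1}, z_g^k ∈ E satisfy y_g^k = σ₁ y^k + (1 − σ₁) y_f^k, y^{k+1} = y^k + θβ(∇F(x_g^k) − ν x_g^k − y^{k+1}) − θ(ν^{-1}(y_g^k + z_g^k) + x^{k+1}), and y_f^{k+1} = y_g^k + σ₂(y^{k+1} − y^k). Then (1/θ + β/2)‖y^{k+1} − y*‖² + (β/(2σ₂))‖y_f^{k+1} − y*‖² ≤ (1/θ)‖y^k − y*‖² + (β(1 − σ₂/2)/(2σ₂))‖y_f^k − y*‖² + D_F(x_g^k,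 x*) − (ν/2)‖x_g^k − x*‖² − 2⟨x^{k+1} − x*, y^{k+1} − y*⟩ − 2ν^{-1}⟨y_g^k + z_g^k − (y* + z*), y^{k+1} − y*⟩ − (β/4)‖y_g^k − y*‖² + (βσ₂²/4 − 1/θ)‖y^{k+1} − y^k‖². -/
/-! The update of `y` is an implicit gradient step, so the three-point identity produces the
`1/θ`-terms. The gradient term `2β⟪g, y^{k+1} − y*⟫` with `g = ∇F(x_g) − ∇F(x*) − ν(x_g − x*)` is
split by Young's inequality; `‖g‖²` is controlled by cocoercivity of the gradient of the convex,
`(L − ν)`-smooth function `F − (ν/2)‖·‖²`, and `2β(L − ν) ≤ 1`. What remains is a quadratic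
inequality in `y^k, y_f^k, y^{k+1}` whose slack is
`(2 − σ₂)/(2(2 + σ₂))‖y^k − y_f^k + Δ‖² + σ₂³/(4(2 + σ₂))‖Δ‖²` with `Δ = y^{k+1} − y^k`:
this is where `σ₁ = (1/σ₂ + 1/2)⁻¹` and `σ₂ ≤ 2` are needed. -/

open scoped InnerProductSpace BigOperators

noncomputable section

section InnerProductSpace

variable {V : Type*} [NormedAddCommGroup V] [InnerProductSpace ℝ V]

theorem norm_sub_sq_le_of_convex_of_smooth {F : V → ℝ} {G : V → V} {L : ℝ} (hL : 0 < L)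
    (hsmooth : ∀ x y, F x ≤ F y + ⟪G y, x - y⟫_ℝ + (L / 2) * ‖x - y‖ ^ 2)
    (hconvex : ∀ x y, F y + ⟪G y, x - y⟫_ℝ ≤ F x) (x y : V) :
    ‖G x - G y‖ ^ 2 ≤ 2 * L * (F x - F y - ⟪G y, x - y⟫_ℝ) := by
  set g := G x - G y
  -- compare the lower bound from `y` and the upper bound from `x` at a gradient step from `x`
  set z := x - L⁻¹ • g
  have hup := hsmooth z x
  have hlow := hconvex z y
  rw [show z - x = -(L⁻¹ • g) by simp [z], inner_neg_right, real_inner_smul_right, norm_neg,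
    norm_smul, mul_pow, Real.norm_eq_abs, sq_abs] at hup
  rw [show z - y = (x - y) - L⁻¹ • g by simp only [z]; abel, inner_sub_right,
    real_inner_smul_right] at hlow
  have hgg : ⟪G x, g⟫_ℝ - ⟪G y, g⟫_ℝ = ‖g‖ ^ 2 := by
    rw [← inner_sub_left, real_inner_self_eq_norm_sq]
  have hLinv : L * L⁻¹ = 1 := mul_inv_cancel₀ hL.ne'
  linear_combination 2 * L * (hup + hlow) - 2 * L * L⁻¹ * hgg
    + ‖g‖ ^ 2 * (L * L⁻¹ - 1) * hLinv

theorem bregman_sub_half_mul_norm_sq (F : V → ℝ) (G : V → V) (ν : ℝ) (x y : V) :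
    (F x - ν / 2 * ‖x‖ ^ 2) - (F y - ν / 2 * ‖y‖ ^ 2) - ⟪G y - ν • y, x - y⟫_ℝ
      = F x - F y - ⟪G y, x - y⟫_ℝ - ν / 2 * ‖x - y‖ ^ 2 := by
  simp only [← real_inner_self_eq_norm_sq, inner_sub_left, inner_sub_right, real_inner_smul_left,
    real_inner_comm x y]
  ring

theorem norm_sub_sub_smul_sq_le_of_strongConvex_of_smooth {F : V → ℝ} {G : V → V}
    {μ L ν : ℝ} (hνL : ν < L) (hνμ : ν ≤ μ)
    (hsmooth : ∀ x y, F x ≤ F y + ⟪G y, x - y⟫_ℝ + (L / 2) * ‖x - y‖ ^ 2)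
    (hstrong : ∀ x y, F y + ⟪G y, x - y⟫_ℝ + (μ / 2) * ‖x - y‖ ^ 2 ≤ F x) (x y : V) :
    ‖G x - G y - ν • (x - y)‖ ^ 2
      ≤ 2 * (L - ν) * (F x - F y - ⟪G y, x - y⟫_ℝ - ν / 2 * ‖x - y‖ ^ 2) := by
  have hshift := bregman_sub_half_mul_norm_sq F G ν
  have h := norm_sub_sq_le_of_convex_of_smooth (F := fun x => F x - ν / 2 * ‖x‖ ^ 2)
    (G := fun x => G x - ν • x) (sub_pos.2 hνL)
    (fun x y => by
      have := hsmooth x y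
      linarith [hshift x y])
    (fun x y => by
      have := hstrong x y
      have : ν / 2 * ‖x - y‖ ^ 2 ≤ μ / 2 * ‖x - y‖ ^ 2 := by gcongr
      linarith [hshift x y]) x y
  rwa [hshift, sub_sub_sub_comm, ← smul_sub] at h

theorem norm_sq_le_of_implicit_step {θ β : ℝ} (hθ : 0 < θ) (hβ : 0 ≤ β) {y y' c g r : V}
    (h : y' - y = θ • (β • (g - (y' - c)) - r)) :
    (1 / θ + β) * ‖y' - c‖ ^ 2
      ≤ 1 / θ * ‖y - c‖ ^ 2 - 1 / θ * ‖y' - y‖ ^ 2 + β * ‖g‖ ^ 2 - 2 * ⟪r, y' - c⟫_ℝ := by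
  have hstep : θ⁻¹ • (y' - y) = β • (g - (y' - c)) - r := by rw [h, inv_smul_smul₀ hθ.ne']
  have hinner : θ⁻¹ * ⟪y' - y, y' - c⟫_ℝ
      = β * ⟪g, y' - c⟫_ℝ - β * ‖y' - c‖ ^ 2 - ⟪r, y' - c⟫_ℝ := by
    rw [← real_inner_smul_left, hstep, inner_sub_left, real_inner_smul_left, inner_sub_left,
      real_inner_self_eq_norm_sq]
    ring
  have hthree : ‖y - c‖ ^ 2 = ‖y' - c‖ ^ 2 - 2 * ⟪y' - c, y' - y⟫_ℝ + ‖y' - y‖ ^ 2 := by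
    rw [← norm_sub_sq_real, sub_sub_sub_cancel_left]
  have hyoung : 0 ≤ ‖g - (y' - c)‖ ^ 2 := sq_nonneg _
  rw [norm_sub_sq_real] at hyoung
  rw [real_inner_comm] at hthree
  linear_combination -θ⁻¹ * hthree + 2 * hinner + β * hyoung

theorem norm_sq_coupling_extrapolation_le {σ σ' : ℝ} (hσ0 : 0 < σ) (hσ2 : σ ≤ 2)
    (hσ' : σ' = (1 / σ + 1 / 2)⁻¹) {y yf y' c : V} :
    1 / (2 * σ) * ‖σ' • y + (1 - σ') • yf + σ • (y' - y) - c‖ ^ 2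
        + 1 / 4 * ‖σ' • y + (1 - σ') • yf - c‖ ^ 2
      ≤ 1 / 2 * ‖y' - c‖ ^ 2 + (1 - σ / 2) / (2 * σ) * ‖yf - c‖ ^ 2
        + σ ^ 2 / 4 * ‖y' - y‖ ^ 2 := by
  have hσ'' : σ' = 2 * σ / (2 + σ) := by
    rw [hσ']; field_simp
  set u := y - c
  set w := yf - c
  set D := y' - y
  have h1 : σ' • y + (1 - σ') • yf + σ • (y' - y) - c = σ' • u + (1 - σ') • w + σ • D := by
    simp only [u, w, D]; module
  have h2 : σ' • y + (1 - σ') • yf - c = σ' • u + (1 - σ') • w := by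
    simp only [u, w]; module
  have h3 : y' - c = u + D := by simp only [u, D]; abel
  have key : 1 / 2 * ‖u + D‖ ^ 2 + (1 - σ / 2) / (2 * σ) * ‖w‖ ^ 2 + σ ^ 2 / 4 * ‖D‖ ^ 2
      - (1 / (2 * σ) * ‖σ' • u + (1 - σ') • w + σ • D‖ ^ 2
        + 1 / 4 * ‖σ' • u + (1 - σ') • w‖ ^ 2)
      = (2 - σ) / (2 * (2 + σ)) * ‖u - w + D‖ ^ 2 + σ ^ 3 / (4 * (2 + σ)) * ‖D‖ ^ 2 := by
    simp only [← real_inner_self_eq_norm_sq, inner_add_left, inner_add_right, inner_sub_left,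
      inner_sub_right, real_inner_smul_left, real_inner_smul_right, real_inner_comm u w,
      real_inner_comm u D, real_inner_comm w D, hσ'']
    field_simp
    ring
  rw [h1, h2, h3]
  have : 0 ≤ (2 - σ) / (2 * (2 + σ)) * ‖u - w + D‖ ^ 2 + σ ^ 3 / (4 * (2 + σ)) * ‖D‖ ^ 2 := by
    have : 0 ≤ 2 - σ := by linarith
    positivity
  linarith

end InnerProductSpace

theorem adom_plus_y_descent_general
    {n d : ℕ}
    (μ L : ℝ) (hμ : 0 < μ) (hμL : μ ≤ L)
    (ν β θ σ₂ σ₁ : ℝ)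
    (hν : ν = μ / 2) (hβ : β = 1 / (2 * L)) (hθ : 0 < θ)
    (hσ₂0 : 0 < σ₂) (hσ₂2 : σ₂ ≤ 2) (hσ₁ : σ₁ = (1 / σ₂ + 1 / 2)⁻¹)
    (F : E n d → ℝ) (G : E n d → E n d)
    (hsmooth : ∀ x y : E n d,
      F x ≤ F y + ⟪G y, x - y⟫_ℝ + (L / 2) * ‖x - y‖ ^ 2)
    (hstrong : ∀ x y : E n d,
      F y + ⟪G y, x - y⟫_ℝ + (μ / 2) * ‖x - y‖ ^ 2 ≤ F x)
    (xs ys zs : E n d)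
    (hopt1 : G xs - ν • xs - ys = 0)
    (hopt2 : ν⁻¹ • (ys + zs) + xs = 0)
    (yk yfk ygk yk1 yfk1 xgk xk1 zgk : E n d)
    (hyg : ygk = σ₁ • yk + (1 - σ₁) • yfk)
    (hyup : yk1 = yk + (θ * β) • (G xgk - ν • xgk - yk1)
      - θ • (ν⁻¹ • (ygk + zgk) + xk1))
    (hyf : yfk1 = ygk + σ₂ • (yk1 - yk)) :
    (1 / θ + β / 2) * ‖yk1 - ys‖ ^ 2 + (β / (2 * σ₂)) * ‖yfk1 - ys‖ ^ 2 ≤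
      (1 / θ) * ‖yk - ys‖ ^ 2 + (β * (1 - σ₂ / 2) / (2 * σ₂)) * ‖yfk - ys‖ ^ 2
        + DF F G xgk xs - (ν / 2) * ‖xgk - xs‖ ^ 2
        - 2 * ⟪xk1 - xs, yk1 - ys⟫_ℝ
        - 2 * ν⁻¹ * ⟪ygk + zgk - (ys + zs), yk1 - ys⟫_ℝ
        - (β / 4) * ‖ygk - ys‖ ^ 2
        + (β * σ₂ ^ 2 / 4 - 1 / θ) * ‖yk1 - yk‖ ^ 2 := by
  have hL : 0 < L := hμ.trans_le hμL
  have hνL : ν < L := by linarith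
  have hβ0 : 0 ≤ β := by rw [hβ]; positivity
  set g := G xgk - G xs - ν • (xgk - xs)
  have hcoco : ‖g‖ ^ 2 ≤ 2 * (L - ν) * (DF F G xgk xs - ν / 2 * ‖xgk - xs‖ ^ 2) :=
    norm_sub_sub_smul_sq_le_of_strongConvex_of_smooth hνL (by linarith) hsmooth hstrong xgk xs
  have hgrad : β * ‖g‖ ^ 2 ≤ DF F G xgk xs - ν / 2 * ‖xgk - xs‖ ^ 2 := by
    have hD : 0 ≤ DF F G xgk xs - ν / 2 * ‖xgk - xs‖ ^ 2 :=
      nonneg_of_mul_nonneg_right ((sq_nonneg _).trans hcoco) (by linarith)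
    calc β * ‖g‖ ^ 2 ≤ β * (2 * (L - ν) * (DF F G xgk xs - ν / 2 * ‖xgk - xs‖ ^ 2)) := by
          gcongr
      _ = (1 - ν / L) * (DF F G xgk xs - ν / 2 * ‖xgk - xs‖ ^ 2) := by
          rw [hβ]; field_simp
      _ ≤ DF F G xgk xs - ν / 2 * ‖xgk - xs‖ ^ 2 :=
          mul_le_of_le_one_left hD (sub_le_self 1 (div_nonneg (by linarith) hL.le))
  have hupd : yk1 - yk = θ • (β • (g - (yk1 - ys))
      - (ν⁻¹ • (ygk + zgk - (ys + zs)) + (xk1 - xs))) := by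
    linear_combination (norm := module) hyup + (θ * β) • hopt1 - θ • hopt2
  have hstep := norm_sq_le_of_implicit_step hθ hβ0 hupd
  rw [inner_add_left, real_inner_smul_left] at hstep
  have hcoup := norm_sq_coupling_extrapolation_le hσ₂0 hσ₂2 hσ₁ (y := yk) (yf := yfk) (y' := yk1) (c := ys)
  rw [← hyg, ← hyf] at hcoup
  linear_combination hstep + β * hcoup + hgrad

/-- **Descent lemma for the y-iterates of ADOM+.**
With `β = 1/(2L)`, `θ > 0`, `0 < σ₂ ≤ 2`, `σ₁ = (1/σ₂ + 1/2)⁻¹`, under the `y`-update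
relations of ADOM+:
`(1/θ + β/2)‖y^{k+1} − y*‖² + (β/(2σ₂))‖y_f^{k+1} − y*‖²
  ≤ (1/θ)‖y^k − y*‖² + (β(1 − σ₂/2)/(2σ₂))‖y_f^k − y*‖²
    + D_F(x_g^k, x*) − (ν/2)‖x_g^k − x*‖² − 2⟨x^{k+1} − x*, y^{k+1} − y*⟩
    − 2ν⁻¹⟨y_g^k + z_g^k − (y* + z*), y^{k+1} − y*⟩ − (β/4)‖y_g^k − y*‖²
    + (βσ₂²/4 − 1/θ)‖y^{k+1} − y^k‖²`. -/
theorem adom_plus_y_descent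
    {n d : ℕ} (hn : 1 ≤ n) (hd : 1 ≤ d)
    (μ L : ℝ) (hμ : 0 < μ) (hμL : μ ≤ L)
    (ν β θ σ₂ σ₁ : ℝ)
    (hν : ν = μ / 2) (hβ : β = 1 / (2 * L)) (hθ : 0 < θ)
    (hσ₂0 : 0 < σ₂) (hσ₂2 : σ₂ ≤ 2) (hσ₁ : σ₁ = (1 / σ₂ + 1 / 2)⁻¹)
    (F : E n d → ℝ) (G : E n d → E n d)
    (hgrad : ∀ x, HasGradientAt F (G x) x)
    (hsmooth : ∀ x y : E n d,
      F x ≤ F y + ⟪G y, x - y⟫_ℝ + (L / 2) * ‖x - y‖ ^ 2)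
    (hstrong : ∀ x y : E n d,
      F y + ⟪G y, x - y⟫_ℝ + (μ / 2) * ‖x - y‖ ^ 2 ≤ F x)
    (xs ys zs : E n d)
    (hopt1 : G xs - ν • xs - ys = 0)
    (hopt2 : ν⁻¹ • (ys + zs) + xs = 0)
    (yk yfk ygk yk1 yfk1 xgk xk1 zgk : E n d)
    (hyg : ygk = σ₁ • yk + (1 - σ₁) • yfk)
    (hyup : yk1 = yk + (θ * β) • (G xgk - ν • xgk - yk1)
      - θ • (ν⁻¹ • (ygk + zgk) + xk1))
    (hyf : yfk1 = ygk + σ₂ • (yk1 - yk)) :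
    (1 / θ + β / 2) * ‖yk1 - ys‖ ^ 2 + (β / (2 * σ₂)) * ‖yfk1 - ys‖ ^ 2 ≤
      (1 / θ) * ‖yk - ys‖ ^ 2 + (β * (1 - σ₂ / 2) / (2 * σ₂)) * ‖yfk - ys‖ ^ 2
        + DF F G xgk xs - (ν / 2) * ‖xgk - xs‖ ^ 2
        - 2 * ⟪xk1 - xs, yk1 - ys⟫_ℝ
        - 2 * ν⁻¹ * ⟪ygk + zgk - (ys + zs), yk1 - ys⟫_ℝ
        - (β / 4) * ‖ygk - ys‖ ^ 2
        + (β * σ₂ ^ 2 / 4 - 1 / θ) * ‖yk1 - yk‖ ^ 2 :=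
  adom_plus_y_descent_general μ L hμ hμL ν β θ σ₂ σ₁ hν hβ hθ hσ₂0 hσ₂2 hσ₁ F G hsmooth hstrong xs
    ys zs hopt1 hopt2 yk yfk ygk yk1 yfk1 xgk xk1 zgk hyg hyup hyf
end
end

section
/- Descent lemma for the z-iterates of ADOM+: let χ ≥ 1, γ > 0, δ > 0, let W be a gossip map with parameter χ, and let z^k ∈ L_c^⊥, z* ∈ L_c^⊥ with y* + z* ∈ L_c. Suppose z_g^k, y_g^k, m^k ∈ E, z^{k+1} = z^k + γδ(z_g^k − z^k) − W(γν^{-1}(y_g^k + z_g^k) + m^k) and m^{k+1} = γν^{-1}(y_g^k + z_g^k) + m^k − W(γν^{-1}(y_g^k + z_g^k) + m^k). Define ẑ^k = z^k − P m^k and ẑ^{k+1} = z^{k+1} − P m^{k+1}. Then (1/γ)‖ẑ^{k+1} − z*‖² + (4/(3γ))‖m^{k+1}‖_P² ≤ (1/γ − δ)‖ẑ^k − z*‖² + (1 − (4χ)^{-1} + 3γδ/2)·(4/(3γ))‖m^k‖_P² − 2ν^{-1}⟨y_g^k + z_g^k − (y* + z*), z^k − z*⟩ + γν^{-2}(1 +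 6χ)‖y_g^k + z_g^k‖_P² + 2δ‖z_g^k − z*‖² + (2γδ² − δ)‖z_g^k − z^k‖². -/
open scoped InnerProductSpace BigOperators

noncomputable section

/-! With `ẑ = z − P m` the gossip terms cancel: `W` vanishes on `L_c` and maps into `L_c^⊥`, so
`ẑ^{k+1} = ẑ^k + γδ(z_g − z) − γν⁻¹ P(y_g + z_g)` and `P m^{k+1} = (I − W) P u` with
`u = γν⁻¹(y_g + z_g) + m^k`, whence `‖P m^{k+1}‖² ≤ (1 − χ⁻¹)‖P u‖²`. As `y* + z* ∈ L_c` and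
`z^k − z* ∈ L_c^⊥`, the cross term only sees `P(y_g + z_g)`. What remains is an inequality in an
arbitrary inner product space: after expanding `‖ẑ^{k+1} − z*‖²`, the `δ`-terms are absorbed by the
parallelogram law and the `m`-terms by Young's inequality with weight `(7χ − 4)/3`, which is where
the constants `4/3`, `1 − (4χ)⁻¹` and `1 + 6χ` come from. -/

section InnerProductSpace

variable {V : Type*} [NormedAddCommGroup V] [InnerProductSpace ℝ V]

theorem norm_sub_sq_le_two_mul_add (x y : V) : ‖x - y‖ ^ 2 ≤ 2 * ‖x‖ ^ 2 + 2 * ‖y‖ ^ 2 := by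
  nlinarith [parallelogram_law_with_norm ℝ x y, sq_nonneg ‖x + y‖]

theorem gossip_young_bound {χ : ℝ} (hχ : 1 ≤ χ) (m w : V) :
    4 / 3 * (1 - χ⁻¹) * ‖w + m‖ ^ 2 + 2 * ⟪m, w⟫_ℝ + 2 * ‖w‖ ^ 2 ≤
      (1 - (4 * χ)⁻¹) * (4 / 3) * ‖m‖ ^ 2 + (1 + 6 * χ) * ‖w‖ ^ 2 := by
  have hχ0 : 0 < χ := by linarith
  have hsq : 0 ≤ ‖m - ((7 * χ - 4) / 3) • w‖ ^ 2 := sq_nonneg _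
  rw [norm_sub_sq_real, norm_smul, real_inner_smul_right, Real.norm_eq_abs, mul_pow, sq_abs] at hsq
  have hcoef : 0 ≤ 5 * χ ^ 2 + 35 * χ - 4 := by nlinarith
  have hsos : (1 - (4 * χ)⁻¹) * (4 / 3) * ‖m‖ ^ 2 + (1 + 6 * χ) * ‖w‖ ^ 2
      - (4 / 3 * (1 - χ⁻¹) * ‖w + m‖ ^ 2 + 2 * ⟪m, w⟫_ℝ + 2 * ‖w‖ ^ 2)
      = χ⁻¹ * (‖m‖ ^ 2 - 2 * ((7 * χ - 4) / 3 * ⟪m, w⟫_ℝ) + ((7 * χ - 4) / 3) ^ 2 * ‖w‖ ^ 2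
        + (5 * χ ^ 2 + 35 * χ - 4) / 9 * ‖w‖ ^ 2) := by
    rw [norm_add_sq_real, real_inner_comm]
    field_simp
    ring
  rw [← sub_nonneg, hsos]
  exact mul_nonneg (inv_nonneg.2 hχ0.le)
    (add_nonneg hsq (mul_nonneg (div_nonneg hcoef (by norm_num)) (sq_nonneg _)))

theorem z_step_descent {ν χ γ δ : ℝ} (hχ : 1 ≤ χ) (hγ : 0 < γ) (hδ : 0 < δ)
    (z zs zg m m' c : V) (hm' : ‖m'‖ ^ 2 ≤ (1 - χ⁻¹) * ‖(γ * ν⁻¹) • c + m‖ ^ 2) :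
    (1 / γ) * ‖z - m + (γ * δ) • (zg - z) - (γ * ν⁻¹) • c - zs‖ ^ 2 + (4 / (3 * γ)) * ‖m'‖ ^ 2 ≤
      (1 / γ - δ) * ‖z - m - zs‖ ^ 2
        + (1 - (4 * χ)⁻¹ + 3 * γ * δ / 2) * (4 / (3 * γ)) * ‖m‖ ^ 2
        - 2 * ν⁻¹ * ⟪c, z - zs⟫_ℝ
        + γ * (ν ^ 2)⁻¹ * (1 + 6 * χ) * ‖c‖ ^ 2
        + 2 * δ * ‖zg - zs‖ ^ 2
        + (2 * γ * δ ^ 2 - δ) * ‖zg - z‖ ^ 2 := by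
  set A := z - m - zs
  set b := zg - z
  set g := δ • b - ν⁻¹ • c
  have hstep : z - m + (γ * δ) • b - (γ * ν⁻¹) • c - zs = A + γ • g := by
    simp only [A, g, smul_sub, smul_smul]
    abel
  have hexp : ‖A + γ • g‖ ^ 2 =
      ‖A‖ ^ 2 + 2 * γ * (δ * ⟪A, b⟫_ℝ - ν⁻¹ * ⟪A, c⟫_ℝ) + γ ^ 2 * ‖g‖ ^ 2 := by
    rw [norm_add_sq_real, real_inner_smul_right, norm_smul, Real.norm_eq_abs, mul_pow, sq_abs,
      inner_sub_right, real_inner_smul_right, real_inner_smul_right]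
    ring
  have hg : ‖g‖ ^ 2 ≤ 2 * δ ^ 2 * ‖b‖ ^ 2 + 2 * (ν ^ 2)⁻¹ * ‖c‖ ^ 2 := by
    have := norm_sub_sq_le_two_mul_add (δ • b) (ν⁻¹ • c)
    rw [norm_smul, norm_smul, Real.norm_eq_abs, Real.norm_eq_abs, mul_pow, mul_pow, sq_abs,
      sq_abs, inv_pow] at this
    linarith
  have hAc : ⟪A, c⟫_ℝ = ⟪c, z - zs⟫_ℝ - ⟪m, c⟫_ℝ := by
    rw [show A = (z - zs) - m by simp only [A]; abel, inner_sub_left, real_inner_comm c]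
  have hAb : ‖A + b‖ ^ 2 = ‖A‖ ^ 2 + 2 * ⟪A, b⟫_ℝ + ‖b‖ ^ 2 := norm_add_sq_real A b
  have hpar : ‖A + b‖ ^ 2 + ‖zg - zs + m‖ ^ 2 = 2 * ‖zg - zs‖ ^ 2 + 2 * ‖m‖ ^ 2 := by
    rw [show A + b = zg - zs - m by simp only [A, b]; abel]
    nlinarith [parallelogram_law_with_norm ℝ (zg - zs) m]
  have hgos := gossip_young_bound hχ m ((γ * ν⁻¹) • c)
  rw [real_inner_smul_right, norm_smul, Real.norm_eq_abs, mul_pow, sq_abs] at hgos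
  rw [hstep, hexp, hAc]
  linear_combination (norm := skip) γ * hg + (1 / γ) * hgos + (4 / (3 * γ)) * hm'
    + δ * sq_nonneg ‖zg - zs + m‖ + δ * hpar - δ * hAb
  exact le_of_eq (by field_simp; ring)

end InnerProductSpace

section Projection

variable {n d : ℕ}

theorem sum_projP (x : E n d) : ∑ i, projP x i = 0 := by
  rcases n.eq_zero_or_pos with rfl | hn
  · simp
  have hn0 : (n : ℝ) ≠ 0 := by positivity
  simp only [projP, PiLp.toLp_apply, Finset.sum_sub_distrib, Finset.sum_const, Finset.card_univ,
    Fintype.card_fin]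
  rw [← Nat.cast_smul_eq_nsmul ℝ, smul_smul, mul_inv_cancel₀ hn0, one_smul, sub_self]

theorem projP_eq_self {x : E n d} (hx : ∑ i, x i = 0) : projP x = x := by
  ext i : 1
  simp [projP, hx]

theorem projP_add (x y : E n d) : projP (x + y) = projP x + projP y := by
  ext i : 1
  simp only [projP, PiLp.toLp_apply, PiLp.add_apply, Finset.sum_add_distrib, smul_add]
  abel

theorem projP_sub (x y : E n d) : projP (x - y) = projP x - projP y := by
  ext i : 1
  simp only [projP, PiLp.toLp_apply, PiLp.sub_apply, Finset.sum_sub_distrib, smul_sub]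
  abel

theorem projP_smul (r : ℝ) (x : E n d) : projP (r • x) = r • projP x := by
  ext i : 1
  simp only [projP, PiLp.toLp_apply, PiLp.smul_apply, ← Finset.smul_sum, smul_sub, smul_comm r]

theorem sub_projP_apply_eq (x : E n d) (i j : Fin n) : (x - projP x) i = (x - projP x) j := by
  simp [projP]

theorem inner_eq_zero_of_forall_eq_of_sum_eq_zero {w v : E n d} (hw : ∀ i j, w i = w j)
    (hv : ∑ i, v i = 0) : ⟪w, v⟫_ℝ = 0 := by
  rcases n.eq_zero_or_pos with rfl | hn
  · simp [PiLp.inner_apply]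
  rw [PiLp.inner_apply, Finset.sum_congr rfl fun i _ => by rw [hw i ⟨0, hn⟩], ← inner_sum, hv,
    inner_zero_right]

theorem inner_projP_left (x : E n d) {v : E n d} (hv : ∑ i, v i = 0) :
    ⟪projP x, v⟫_ℝ = ⟪x, v⟫_ℝ := by
  have := inner_eq_zero_of_forall_eq_of_sum_eq_zero (sub_projP_apply_eq x) hv
  rw [inner_sub_left] at this
  linarith

end Projection

namespace IsGossip

variable {n d : ℕ} {χ : ℝ} {W : E n d → E n d}

theorem map_add (hW : IsGossip χ W) (u v : E n d) : W (u + v) = W u + W v := by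
  obtain ⟨⟨Wt, hWt⟩, -⟩ := hW
  ext i : 1
  simp [hWt, smul_add, Finset.sum_add_distrib]

theorem map_projP (hW : IsGossip χ W) (u : E n d) : W (projP u) = W u := by
  have hconst : W (u - projP u) = 0 := hW.2.1 _ (sub_projP_apply_eq u)
  rw [← add_zero (W (projP u)), ← hconst, ← hW.map_add, add_sub_cancel]

theorem projP_sub_self_apply (hW : IsGossip χ W) (u : E n d) :
    projP (u - W u) = projP u - W u := by
  rw [projP_sub, projP_eq_self (hW.2.2.1 u)]

theorem norm_projP_sub_self_apply_sq_le (hW : IsGossip χ W) (u : E n d) :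
    ‖projP (u - W u)‖ ^ 2 ≤ (1 - χ⁻¹) * ‖projP u‖ ^ 2 := by
  rw [hW.projP_sub_self_apply, ← hW.map_projP, norm_sub_rev]
  exact hW.2.2.2 _ (sum_projP u)

end IsGossip

theorem adom_plus_z_descent_general
    {n d : ℕ}
    (ν χ γ δ : ℝ) (hχ : 1 ≤ χ) (hγ : 0 < γ) (hδ : 0 < δ)
    (W : E n d → E n d) (hW : IsGossip χ W)
    (ys zs zk zgk ygk mk zk1 mk1 : E n d)
    (hzk : ∑ i, zk i = 0) (hzs : ∑ i, zs i = 0)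
    (hyszs : ∀ i j : Fin n, (ys + zs) i = (ys + zs) j)
    (hzup : zk1 = zk + (γ * δ) • (zgk - zk) - W ((γ * ν⁻¹) • (ygk + zgk) + mk))
    (hmup : mk1 = (γ * ν⁻¹) • (ygk + zgk) + mk - W ((γ * ν⁻¹) • (ygk + zgk) + mk)) :
    (1 / γ) * ‖zk1 - projP mk1 - zs‖ ^ 2 + (4 / (3 * γ)) * ‖projP mk1‖ ^ 2 ≤
      (1 / γ - δ) * ‖zk - projP mk - zs‖ ^ 2
        + (1 - (4 * χ)⁻¹ + 3 * γ * δ / 2) * (4 / (3 * γ)) * ‖projP mk‖ ^ 2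
        - 2 * ν⁻¹ * ⟪ygk + zgk - (ys + zs), zk - zs⟫_ℝ
        + γ * (ν ^ 2)⁻¹ * (1 + 6 * χ) * ‖projP (ygk + zgk)‖ ^ 2
        + 2 * δ * ‖zgk - zs‖ ^ 2
        + (2 * γ * δ ^ 2 - δ) * ‖zgk - zk‖ ^ 2 := by
  set u := (γ * ν⁻¹) • (ygk + zgk) + mk
  have hPu : projP u = (γ * ν⁻¹) • projP (ygk + zgk) + projP mk := by
    rw [projP_add, projP_smul]
  have hm : ‖projP mk1‖ ^ 2 ≤ (1 - χ⁻¹) * ‖(γ * ν⁻¹) • projP (ygk + zgk) + projP mk‖ ^ 2 := by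
    rw [hmup, ← hPu]
    exact hW.norm_projP_sub_self_apply_sq_le u
  have hz : zk1 - projP mk1 =
      zk - projP mk + (γ * δ) • (zgk - zk) - (γ * ν⁻¹) • projP (ygk + zgk) := by
    rw [hzup, hmup, hW.projP_sub_self_apply, hPu]
    abel
  have hzv : ∑ i, (zk - zs) i = 0 := by
    simp [Finset.sum_sub_distrib, hzk, hzs]
  have hip : ⟪ygk + zgk - (ys + zs), zk - zs⟫_ℝ = ⟪projP (ygk + zgk), zk - zs⟫_ℝ := by
    rw [inner_sub_left, inner_eq_zero_of_forall_eq_of_sum_eq_zero hyszs hzv, sub_zero,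
      inner_projP_left _ hzv]
  rw [hz, hip]
  exact z_step_descent hχ hγ hδ zk zs zgk (projP mk) (projP mk1) _ hm

/-- **Descent lemma for the z-iterates of ADOM+.**
Let `χ ≥ 1`, `γ > 0`, `δ > 0`, `W` a gossip map with parameter `χ`, `z^k, z* ∈ L_c^⊥` with
`y* + z* ∈ L_c`. Under the `z`- and `m`-update relations of ADOM+, with `ẑ = z − Pm`:
`(1/γ)‖ẑ^{k+1} − z*‖² + (4/(3γ))‖m^{k+1}‖_P²
  ≤ (1/γ − δ)‖ẑ^k − z*‖² + (1 − (4χ)⁻¹ + 3γδ/2)(4/(3γ))‖m^k‖_P²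
    − 2ν⁻¹⟨y_g^k + z_g^k − (y* + z*), z^k − z*⟩ + γν⁻²(1 + 6χ)‖y_g^k + z_g^k‖_P²
    + 2δ‖z_g^k − z*‖² + (2γδ² − δ)‖z_g^k − z^k‖²`. -/
theorem adom_plus_z_descent
    {n d : ℕ} (hn : 1 ≤ n) (hd : 1 ≤ d)
    (ν χ γ δ : ℝ) (hν : 0 < ν) (hχ : 1 ≤ χ) (hγ : 0 < γ) (hδ : 0 < δ)
    (W : E n d → E n d) (hW : IsGossip χ W)
    (ys zs zk zgk ygk mk zk1 mk1 : E n d)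
    (hzk : ∑ i, zk i = 0) (hzs : ∑ i, zs i = 0)
    (hyszs : ∀ i j : Fin n, (ys + zs) i = (ys + zs) j)
    (hzup : zk1 = zk + (γ * δ) • (zgk - zk) - W ((γ * ν⁻¹) • (ygk + zgk) + mk))
    (hmup : mk1 = (γ * ν⁻¹) • (ygk + zgk) + mk - W ((γ * ν⁻¹) • (ygk + zgk) + mk)) :
    (1 / γ) * ‖zk1 - projP mk1 - zs‖ ^ 2 + (4 / (3 * γ)) * ‖projP mk1‖ ^ 2 ≤
      (1 / γ - δ) * ‖zk - projP mk - zs‖ ^ 2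
        + (1 - (4 * χ)⁻¹ + 3 * γ * δ / 2) * (4 / (3 * γ)) * ‖projP mk‖ ^ 2
        - 2 * ν⁻¹ * ⟪ygk + zgk - (ys + zs), zk - zs⟫_ℝ
        + γ * (ν ^ 2)⁻¹ * (1 + 6 * χ) * ‖projP (ygk + zgk)‖ ^ 2
        + 2 * δ * ‖zgk - zs‖ ^ 2
        + (2 * γ * δ ^ 2 - δ) * ‖zgk - zk‖ ^ 2 :=
  adom_plus_z_descent_general ν χ γ δ hχ hγ hδ W hW ys zs zk zgk ygk mk zk1 mk1 hzk hzs hyszs hzup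
    hmup
end
end

section
/- Algebraic three-point inequality for momentum iterates: if y^k, y_f^k, y^{k+1}, y* ∈ H, y_g^k = σ₁ y^k + (1 − σ₁) y_f^k, and y_f^{k+1} = y_g^k + σ₂(y^{k+1} − y^k), then −‖y^{k+1} − y*‖² ≤ ((1 − σ₁)/σ₁)‖y_f^k − y*‖² − (1/σ₂)‖y_f^{k+1} − y*‖² − (1/σ₁ − 1/σ₂)‖y_g^k − y*‖² + (σ₂ − σ₁)‖y^{k+1} − y^k‖². -/
open scoped InnerProductSpace

/-!
Expanding `‖y_f^{k+1} - y*‖²` around `y_g^k - y*` makes all terms involving `σ₂` collapse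
to `-2⟪y_g^k - y*, y^{k+1} - y^k⟫`. Since
`y_g^k + σ₁ (y^{k+1} - y^k) = σ₁ y^{k+1} + (1 - σ₁) y_f^k`, the norm identity for convex
combinations then shows that the right-hand side plus `‖y^{k+1} - y*‖²` is exactly
`(1 - σ₁)‖y^{k+1} - y_f^k‖² ≥ 0`.
-/

section

variable {H : Type*} [NormedAddCommGroup H] [InnerProductSpace ℝ H]

theorem norm_add_smul_sq_real (x y : H) (t : ℝ) :
    ‖x + t • y‖ ^ 2 = ‖x‖ ^ 2 + 2 * t * ⟪x, y⟫_ℝ + t ^ 2 * ‖y‖ ^ 2 := by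
  rw [norm_add_sq_real, real_inner_smul_right, norm_smul, mul_pow, Real.norm_eq_abs, sq_abs]
  ring

theorem norm_smul_add_one_sub_smul_sq_real (x y : H) (t : ℝ) :
    ‖t • x + (1 - t) • y‖ ^ 2
      = t * ‖x‖ ^ 2 + (1 - t) * ‖y‖ ^ 2 - t * (1 - t) * ‖x - y‖ ^ 2 := by
  have hx := norm_add_sq_real y (x - y)
  rw [add_sub_cancel] at hx
  have hcomb : t • x + (1 - t) • y = y + t • (x - y) := by module
  rw [hcomb, norm_add_smul_sq_real]
  linear_combination (-t) * hx

theorem momentum_three_point_identity (σ₁ σ₂ : ℝ) (hσ₁ : σ₁ ≠ 0) (hσ₂ : σ₂ ≠ 0)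
    (yk yfk yk1 yfk1 ygk ys : H)
    (hyg : ygk = σ₁ • yk + (1 - σ₁) • yfk)
    (hyf : yfk1 = ygk + σ₂ • (yk1 - yk)) :
    ((1 - σ₁) / σ₁) * ‖yfk - ys‖ ^ 2 - (1 / σ₂) * ‖yfk1 - ys‖ ^ 2
        - (1 / σ₁ - 1 / σ₂) * ‖ygk - ys‖ ^ 2 + (σ₂ - σ₁) * ‖yk1 - yk‖ ^ 2
      = (1 - σ₁) * ‖yk1 - yfk‖ ^ 2 - ‖yk1 - ys‖ ^ 2 := by
  have hstep : yfk1 - ys = (ygk - ys) + σ₂ • (yk1 - yk) := by rw [hyf]; abel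
  have hmix : (ygk - ys) + σ₁ • (yk1 - yk) = σ₁ • (yk1 - ys) + (1 - σ₁) • (yfk - ys) := by
    rw [hyg]; module
  have hσ₁step := norm_add_smul_sq_real (ygk - ys) (yk1 - yk) σ₁
  have hconvex := norm_smul_add_one_sub_smul_sq_real (yk1 - ys) (yfk - ys) σ₁
  rw [← hmix, sub_sub_sub_cancel_right] at hconvex
  rw [hstep, norm_add_smul_sq_real]
  field_simp
  linear_combination (-σ₂) * (hconvex - hσ₁step)

end

/-- **Algebraic three-point inequality for momentum iterates.**
If `y_g^k = σ₁ y^k + (1 − σ₁) y_f^k` and `y_f^{k+1} = y_g^k + σ₂ (y^{k+1} − y^k)`, then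
`−‖y^{k+1} − y*‖² ≤ ((1 − σ₁)/σ₁)‖y_f^k − y*‖² − (1/σ₂)‖y_f^{k+1} − y*‖²
  − (1/σ₁ − 1/σ₂)‖y_g^k − y*‖² + (σ₂ − σ₁)‖y^{k+1} − y^k‖²`. -/
theorem momentum_three_point_inequality
    {H : Type*} [NormedAddCommGroup H] [InnerProductSpace ℝ H]
    (σ₁ σ₂ : ℝ) (hσ₁0 : 0 < σ₁) (hσ₁1 : σ₁ ≤ 1) (hσ₁₂ : σ₁ ≤ σ₂)
    (yk yfk yk1 yfk1 ygk ys : H)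
    (hyg : ygk = σ₁ • yk + (1 - σ₁) • yfk)
    (hyf : yfk1 = ygk + σ₂ • (yk1 - yk)) :
    -‖yk1 - ys‖ ^ 2 ≤
      ((1 - σ₁) / σ₁) * ‖yfk - ys‖ ^ 2 - (1 / σ₂) * ‖yfk1 - ys‖ ^ 2
        - (1 / σ₁ - 1 / σ₂) * ‖ygk - ys‖ ^ 2 + (σ₂ - σ₁) * ‖yk1 - yk‖ ^ 2 := by
  have hσ₂ : σ₂ ≠ 0 := (hσ₁0.trans_le hσ₁₂).ne'
  rw [momentum_three_point_identity σ₁ σ₂ hσ₁0.ne' hσ₂ yk yfk yk1 yfk1 ygk ys hyg hyf]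
  have := mul_nonneg (sub_nonneg.2 hσ₁1) (sq_nonneg ‖yk1 - yfk‖)
  linarith
end

section
/- Algebraic cross-term lower bound: let 0 < σ₂ ≤ 2 and σ₁ = (1/σ₂ + 1/2)^{-1}. If y^k, y_f^k, y_g^k, z^k, z_f^k, z_g^k, y*, z* ∈ H satisfy y_g^k = σ₁ y^k + (1 − σ₁) y_f^k and z_g^k = σ₁ z^k + (1 − σ₁) z_f^k, then 2⟨y_g^k + z_g^k − (y* + z*), y^k + z^k − (y* + z*)⟩ ≥ 2‖y_g^k + z_g^k − (y* + z*)‖² + ((1 − σ₂/2)/σ₂)(‖y_g^k + z_g^k − (y* + z*)‖² − ‖y_f^k + z_f^k − (y* + z*)‖²). -/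
open scoped InnerProductSpace

/-! Put `a = y_g + z_g - (y* + z*)`, `b = y + z - (y* + z*)`, `c = y_f + z_f - (y* + z*)` and
`t = (1 - σ₂/2)/σ₂ ≥ 0`. Then `σ₁ = (1 + t)⁻¹` and `a = σ₁ b + (1 - σ₁) c`, i.e.
`b = (1 + t) a - t c`; expanding `2⟪a, b⟫` shows that it exceeds `2‖a‖² + t (‖a‖² - ‖c‖²)`
by exactly `t ‖a - c‖² ≥ 0`. -/

section CrossTerm

variable {E : Type*} [NormedAddCommGroup E] [InnerProductSpace ℝ E]

theorem two_inner_eq_of_eq_inv_smul_add_smul {a b c : E} {t : ℝ} (ht : 1 + t ≠ 0)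
    (h : a = (1 + t)⁻¹ • b + (1 - (1 + t)⁻¹) • c) :
    2 * ⟪a, b⟫_ℝ = 2 * ‖a‖ ^ 2 + t * (‖a‖ ^ 2 - ‖c‖ ^ 2) + t * ‖a - c‖ ^ 2 := by
  have hb : b = (1 + t) • a - t • c := by
    rw [h]
    match_scalars
    · field_simp
    · field_simp
      ring
  rw [hb, inner_sub_right, real_inner_smul_right, real_inner_smul_right,
    real_inner_self_eq_norm_sq, norm_sub_sq_real]
  ring

theorem two_mul_norm_sq_add_le_two_inner {a b c : E} {t : ℝ} (ht : 0 ≤ t)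
    (h : a = (1 + t)⁻¹ • b + (1 - (1 + t)⁻¹) • c) :
    2 * ‖a‖ ^ 2 + t * (‖a‖ ^ 2 - ‖c‖ ^ 2) ≤ 2 * ⟪a, b⟫_ℝ := by
  rw [two_inner_eq_of_eq_inv_smul_add_smul (by linarith) h]
  have : 0 ≤ t * ‖a - c‖ ^ 2 := by positivity
  linarith

end CrossTerm

/-- **Algebraic cross-term lower bound.**
Let `0 < σ₂ ≤ 2` and `σ₁ = (1/σ₂ + 1/2)⁻¹`. If `y_g^k = σ₁ y^k + (1 − σ₁) y_f^k` and
`z_g^k = σ₁ z^k + (1 − σ₁) z_f^k`, then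
`2⟨y_g^k + z_g^k − (y* + z*), y^k + z^k − (y* + z*)⟩ ≥ 2‖y_g^k + z_g^k − (y* + z*)‖²
  + ((1 − σ₂/2)/σ₂)(‖y_g^k + z_g^k − (y* + z*)‖² − ‖y_f^k + z_f^k − (y* + z*)‖²)`. -/
theorem cross_term_lower_bound
    {H : Type*} [NormedAddCommGroup H] [InnerProductSpace ℝ H]
    (σ₁ σ₂ : ℝ) (hσ₂0 : 0 < σ₂) (hσ₂2 : σ₂ ≤ 2) (hσ₁ : σ₁ = (1 / σ₂ + 1 / 2)⁻¹)
    (yk yfk ygk zk zfk zgk ys zs : H)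
    (hyg : ygk = σ₁ • yk + (1 - σ₁) • yfk)
    (hzg : zgk = σ₁ • zk + (1 - σ₁) • zfk) :
    2 * ‖ygk + zgk - (ys + zs)‖ ^ 2
      + ((1 - σ₂ / 2) / σ₂) * (‖ygk + zgk - (ys + zs)‖ ^ 2 - ‖yfk + zfk - (ys + zs)‖ ^ 2)
      ≤ 2 * ⟪ygk + zgk - (ys + zs), yk + zk - (ys + zs)⟫_ℝ := by
  have ht : 0 ≤ (1 - σ₂ / 2) / σ₂ := div_nonneg (by linarith) hσ₂0.le
  have hσ₁t : σ₁ = (1 + (1 - σ₂ / 2) / σ₂)⁻¹ := by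
    rw [hσ₁]
    congr 1
    field_simp
    ring
  refine two_mul_norm_sq_add_le_two_inner ht ?_
  rw [← hσ₁t, hyg, hzg]
  module
end

section
/- Multi-consensus contraction: let T ≥ 1 and let W_0, …, W_{T−1} be gossip matrices with parameter χ ≥ 1. Define M = I − (I − W_{T−1})(I − W_{T−2})⋯(I − W_0). Then M is again a gossip matrix with improved contraction: M x = 0 whenever x_1 = ⋯ = x_n; the coordinates of M x sum to 0 for every x ∈ ℝ^n; and ‖M x − x‖² ≤ (1 − χ^{-1})^T ‖x‖² for every x ∈ ℝ^n with ∑_{i=1}^n x_i = 0. -/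
open scoped BigOperators

/-- `W` is a gossip matrix with parameter `χ ≥ 1`: it kills constant vectors, its range has
coordinates summing to zero, and it is a `(1 - χ⁻¹)`-contraction (in squared Euclidean norm)
on the space of mean-zero vectors. -/
def IsGossipMatrix {n : ℕ} (χ : ℝ) (W : Matrix (Fin n) (Fin n) ℝ) : Prop :=
  (∀ x : Fin n → ℝ, (∀ i j : Fin n, x i = x j) → W.mulVec x = 0) ∧
  (∀ x : Fin n → ℝ, ∑ i, W.mulVec x i = 0) ∧
  (∀ x : Fin n → ℝ, ∑ i, x i = 0 →
    ∑ i, (W.mulVec x i - x i) ^ 2 ≤ (1 - χ⁻¹) * ∑ i, (x i) ^ 2)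

/-- The product `(I − W_{t−1}) ⋯ (I − W_0)`. -/
noncomputable def consensusProd {n : ℕ} (W : ℕ → Matrix (Fin n) (Fin n) ℝ) :
    ℕ → Matrix (Fin n) (Fin n) ℝ
  | 0 => 1
  | t + 1 => (1 - W t) * consensusProd W t

/-! `M x - x = -P x` for `P = (I - W_{T-1}) ⋯ (I - W_0)` and `M = I - P`, so it suffices to show
that `P` fixes constant vectors, preserves coordinate sums, and shrinks the squared norm of a
mean-zero vector by `1 - χ⁻¹` at each factor. The last point goes by induction: since each
`W_t` preserves coordinate sums, `P_t x` stays mean-zero, and then `(I - W_t)(P_t x)` has squared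
norm at most `(1 - χ⁻¹) ‖P_t x‖²` by the gossip contraction of `W_t`. -/

section

open Matrix

variable {n : ℕ} (W : ℕ → Matrix (Fin n) (Fin n) ℝ)

lemma consensusProd_succ_mulVec (t : ℕ) (x : Fin n → ℝ) :
    consensusProd W (t + 1) *ᵥ x = consensusProd W t *ᵥ x - W t *ᵥ (consensusProd W t *ᵥ x) := by
  rw [consensusProd, ← mulVec_mulVec, sub_mulVec, one_mulVec]

variable {W}

lemma consensusProd_mulVec_eq_self {t : ℕ} {x : Fin n → ℝ}
    (hW : ∀ s < t, W s *ᵥ x = 0) : consensusProd W t *ᵥ x = x := by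
  induction t with
  | zero => simp [consensusProd]
  | succ t ih =>
    rw [consensusProd_succ_mulVec, ih fun s hs => hW s (by omega), hW t t.lt_succ_self, sub_zero]

lemma sum_consensusProd_mulVec {t : ℕ} (hW : ∀ s < t, ∀ y, ∑ i, (W s *ᵥ y) i = 0)
    (x : Fin n → ℝ) : ∑ i, (consensusProd W t *ᵥ x) i = ∑ i, x i := by
  induction t with
  | zero => simp [consensusProd]
  | succ t ih =>
    rw [consensusProd_succ_mulVec]
    simp only [Pi.sub_apply, Finset.sum_sub_distrib]
    rw [hW t t.lt_succ_self, ih fun s hs => hW s (by omega), sub_zero]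

lemma sum_sq_consensusProd_mulVec_le {t : ℕ} {c : ℝ} (hc : 0 ≤ c)
    (hsum : ∀ s < t, ∀ y, ∑ i, (W s *ᵥ y) i = 0)
    (hcontr : ∀ s < t, ∀ y : Fin n → ℝ, ∑ i, y i = 0 →
      ∑ i, ((W s *ᵥ y) i - y i) ^ 2 ≤ c * ∑ i, y i ^ 2)
    {x : Fin n → ℝ} (hx : ∑ i, x i = 0) :
    ∑ i, (consensusProd W t *ᵥ x) i ^ 2 ≤ c ^ t * ∑ i, x i ^ 2 := by
  induction t with
  | zero => simp [consensusProd]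
  | succ t ih =>
    set y := consensusProd W t *ᵥ x
    have hy : ∑ i, y i = 0 := by
      rw [sum_consensusProd_mulVec fun s hs => hsum s (by omega), hx]
    calc ∑ i, (consensusProd W (t + 1) *ᵥ x) i ^ 2
        = ∑ i, ((W t *ᵥ y) i - y i) ^ 2 := by
          simp only [consensusProd_succ_mulVec, Pi.sub_apply, y]
          exact Finset.sum_congr rfl fun i _ => by ring
      _ ≤ c * ∑ i, y i ^ 2 := hcontr t t.lt_succ_self y hy
      _ ≤ c * (c ^ t * ∑ i, x i ^ 2) := by
          gcongr
          exact ih (fun s hs => hsum s (by omega)) fun s hs => hcontr s (by omega)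
      _ = c ^ (t + 1) * ∑ i, x i ^ 2 := by ring

end

theorem multi_consensus_contraction_general {n : ℕ}
    (χ : ℝ) (hχ : 1 ≤ χ) (T : ℕ)
    (W : ℕ → Matrix (Fin n) (Fin n) ℝ)
    (hW : ∀ t, t < T → IsGossipMatrix χ (W t)) :
    (∀ x : Fin n → ℝ, (∀ i j : Fin n, x i = x j) →
        (1 - consensusProd W T).mulVec x = 0) ∧
    (∀ x : Fin n → ℝ, ∑ i, (1 - consensusProd W T).mulVec x i = 0) ∧
    (∀ x : Fin n → ℝ, ∑ i, x i = 0 →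
        ∑ i, ((1 - consensusProd W T).mulVec x i - x i) ^ 2 ≤
          (1 - χ⁻¹) ^ T * ∑ i, (x i) ^ 2) := by
  have hsum : ∀ t < T, ∀ y, ∑ i, (W t).mulVec y i = 0 := fun t ht => (hW t ht).2.1
  have hc : 0 ≤ 1 - χ⁻¹ := sub_nonneg.mpr (inv_le_one_of_one_le₀ hχ)
  have hM : ∀ x, (1 - consensusProd W T).mulVec x = x - (consensusProd W T).mulVec x := fun x => by
    rw [Matrix.sub_mulVec, Matrix.one_mulVec]
  refine ⟨fun x hx => ?_, fun x => ?_, fun x hx => ?_⟩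
  · rw [hM, consensusProd_mulVec_eq_self fun t ht => (hW t ht).1 x hx, sub_self]
  · simp only [hM, Pi.sub_apply, Finset.sum_sub_distrib, sum_consensusProd_mulVec hsum, sub_self]
  · simp only [hM, Pi.sub_apply, sub_sub_cancel_left, neg_sq]
    exact sum_sq_consensusProd_mulVec_le hc hsum (fun t ht => (hW t ht).2.2) hx

/-- **Multi-consensus contraction.**
Let `T ≥ 1` and let `W_0, …, W_{T−1}` be gossip matrices with parameter `χ ≥ 1`. Then
`M = I − (I − W_{T−1})(I − W_{T−2})⋯(I − W_0)` is again a gossip matrix, with improved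
contraction factor `(1 − χ⁻¹)^T` on mean-zero vectors. -/
theorem multi_consensus_contraction {n : ℕ} (hn : 1 ≤ n)
    (χ : ℝ) (hχ : 1 ≤ χ) (T : ℕ) (hT : 1 ≤ T)
    (W : ℕ → Matrix (Fin n) (Fin n) ℝ)
    (hW : ∀ t, t < T → IsGossipMatrix χ (W t)) :
    (∀ x : Fin n → ℝ, (∀ i j : Fin n, x i = x j) →
        (1 - consensusProd W T).mulVec x = 0) ∧
    (∀ x : Fin n → ℝ, ∑ i, (1 - consensusProd W T).mulVec x i = 0) ∧
    (∀ x : Fin n → ℝ, ∑ i, x i = 0 →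
        ∑ i, ((1 - consensusProd W T).mulVec x i - x i) ^ 2 ≤
          (1 - χ⁻¹) ^ T * ∑ i, (x i) ^ 2) :=
  multi_consensus_contraction_general χ hχ T W hW
end

section
/- Information-propagation lemma for the cyclic star construction (Lemma A.2): for every q ∈ ℕ, every time step k with 0 ≤ k ≤ k_q, and every i ∈ V: s_i(k) ≤ 2⌊q/m⌋ if i ∈ V₃ or i_c(q) ≤ i ≤ 2m, and s_i(k) ≤ 2⌊q/m⌋ + 1 otherwise. -/
/-- The number of communication rounds performed before time step `k`
(`c j = true` means time step `j` is a decentralized communication round,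
`c j = false` means it is a local computation round). -/
def qCount (c : ℕ → Bool) (k : ℕ) : ℕ :=
  ((Finset.range k).filter fun j => c j = true).card

/-- The center of the star graph used at communication round `q`: `i_c(q) = m + 1 + (q mod m)`. -/
def icenter (m q : ℕ) : ℕ := m + 1 + q % m

/-!
Computation never lets a node of `V₁` pass an odd value or a node of `V₃` pass an even one, and
never raises a node of `V₂`; so progress has to be carried between `V₃` and `V₁` by the star
centers, which sweep `V₂` once every `m` communication rounds. Hence the ceiling
`2⌊q/m⌋ + [i ∉ V₃ ∪ {i_c(q), …, 2m}]` is invariant up to time `k_q`: computation respects its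
parity on `V₁` and `V₃`, and the center of a round `r < q` collects at most `2⌊r/m⌋ + 1`, which
still fits under the ceiling of round `q` at that center.
-/

section qCount

variable {c : ℕ → Bool}

theorem qCount_mono : Monotone (qCount c) := fun _ _ hab =>
  Finset.card_le_card (Finset.filter_subset_filter _ (Finset.range_subset_range.2 hab))

theorem qCount_succ_of_true {k : ℕ} (hk : c k = true) : qCount c (k + 1) = qCount c k + 1 := by
  rw [qCount, Finset.range_add_one, Finset.filter_insert, if_pos hk,
    Finset.card_insert_of_notMem (by simp)]
  rfl

theorem qCount_lt_of_lt {a b : ℕ} (ha : c a = true) (hab : a < b) : qCount c a < qCount c b :=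
  (qCount_succ_of_true ha).symm.trans_le (qCount_mono hab)

theorem qCount_injOn : Set.InjOn (qCount c) {k | c k = true} := by
  intro a ha b hb hab
  rcases lt_trichotomy a b with h | h | h
  · exact absurd hab (qCount_lt_of_lt ha h).ne
  · exact h
  · exact absurd hab (qCount_lt_of_lt hb h).ne'

theorem K_qCount_eq {K : ℕ → ℕ} (hK : ∀ q, c (K q) = true ∧ qCount c (K q) = q) {k : ℕ}
    (hk : c k = true) : K (qCount c k) = k :=
  qCount_injOn (hK _).1 hk (hK _).2

end qCount

theorem Nat.div_lt_div_of_lt_of_mod_le {a b m : ℕ} (hab : a < b) (hmod : b % m ≤ a % m) :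
    a / m < b / m := by
  by_contra! h
  have := Nat.mul_le_mul_left m h
  have := Nat.div_add_mod a m
  have := Nat.div_add_mod b m
  omega

theorem le_icenter (m r : ℕ) : m + 1 ≤ icenter m r := Nat.le_add_right _ _

theorem icenter_le {m : ℕ} (hm : 0 < m) (r : ℕ) : icenter m r ≤ 2 * m := by
  have := Nat.mod_lt r hm
  unfold icenter
  omega

def propagationBound (m q i : ℕ) : ℕ :=
  2 * (q / m) + if 2 * m + 1 ≤ i ∨ (icenter m q ≤ i ∧ i ≤ 2 * m) then 0 else 1

section propagationBound

variable {m q : ℕ}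

theorem propagationBound_le (i : ℕ) : propagationBound m q i ≤ 2 * (q / m) + 1 := by
  unfold propagationBound
  split_ifs <;> omega

theorem two_mul_div_le_propagationBound {r : ℕ} (hrq : r ≤ q) (i : ℕ) :
    2 * (r / m) ≤ propagationBound m q i :=
  (Nat.mul_le_mul_left 2 (Nat.div_le_div_right hrq)).trans (Nat.le_add_right _ _)

theorem propagationBound_of_le {i : ℕ} (hi : i ≤ m) : propagationBound m q i = 2 * (q / m) + 1 := by
  have := le_icenter m q
  rw [propagationBound, if_neg (by omega)]

theorem propagationBound_of_lt {i : ℕ} (hi : 2 * m < i) : propagationBound m q i = 2 * (q / m) := by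
  rw [propagationBound, if_pos (Or.inl (Nat.succ_le_of_lt hi))]
  rfl

theorem propagationBound_icenter (hm : 0 < m) (q : ℕ) :
    propagationBound m q (icenter m q) = 2 * (q / m) := by
  rw [propagationBound, if_pos (Or.inr ⟨le_rfl, icenter_le hm q⟩)]
  rfl

/-- If `i_c(r) ≥ i_c(q)` with `r < q`, the sweep over `V₂` has wrapped around since round `r`. -/
theorem two_mul_div_add_one_le_propagationBound_icenter (hm : 0 < m) {r : ℕ} (hrq : r < q) :
    2 * (r / m) + 1 ≤ propagationBound m q (icenter m r) := by
  by_cases hcq : icenter m q ≤ icenter m r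
  · have hmod : q % m ≤ r % m := by unfold icenter at hcq; omega
    have := Nat.div_lt_div_of_lt_of_mod_le hrq hmod
    have := two_mul_div_le_propagationBound (m := m) (le_refl q) (icenter m r)
    omega
  · have := icenter_le hm r
    rw [propagationBound, if_neg (by omega)]
    have := Nat.div_le_div_right (c := m) hrq.le
    omega

end propagationBound

theorem add_one_sub_mod_two_le {x d : ℕ} (h : x ≤ 2 * d + 1) : x + (1 - x % 2) ≤ 2 * d + 1 := by
  omega

theorem add_mod_two_le {x d : ℕ} (h : x ≤ 2 * d) : x + x % 2 ≤ 2 * d := by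
  omega

section step

variable {m q k : ℕ} {s : ℕ → ℕ → ℕ}

theorem le_propagationBound_succ_of_comp
    (hstep : (∀ i, 1 ≤ i → i ≤ m → s i (k + 1) ≤ s i k + (1 - s i k % 2)) ∧
      (∀ i, m + 1 ≤ i → i ≤ 2 * m → s i (k + 1) ≤ s i k) ∧
      (∀ i, 2 * m + 1 ≤ i → i ≤ 3 * m → s i (k + 1) ≤ s i k + s i k % 2))
    (hk : ∀ i, 1 ≤ i → i ≤ 3 * m → s i k ≤ propagationBound m q i) :
    ∀ i, 1 ≤ i → i ≤ 3 * m → s i (k + 1) ≤ propagationBound m q i := by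
  obtain ⟨hV₁, hV₂, hV₃⟩ := hstep
  intro i h1 h3
  have hi := hk i h1 h3
  rcases le_or_gt i m with hV₁i | hV₁i
  · rw [propagationBound_of_le hV₁i] at hi ⊢
    exact (hV₁ i h1 hV₁i).trans (add_one_sub_mod_two_le hi)
  rcases le_or_gt i (2 * m) with hV₂i | hV₃i
  · exact (hV₂ i hV₁i hV₂i).trans hi
  · rw [propagationBound_of_lt hV₃i] at hi ⊢
    exact (hV₃ i hV₃i h3).trans (add_mod_two_le hi)

theorem le_propagationBound_succ_of_comm (hm : 0 < m) {r : ℕ}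
    (hstep : (∀ i, 1 ≤ i → i ≤ 3 * m → i ≠ icenter m r →
        s i (k + 1) ≤ max (s i k) (s (icenter m r) k)) ∧
      s (icenter m r) (k + 1) ≤ (Finset.Icc 1 (3 * m)).sup fun j => s j k)
    (hrq : r < q)
    (hr : ∀ i, 1 ≤ i → i ≤ 3 * m → s i k ≤ propagationBound m r i)
    (hq : ∀ i, 1 ≤ i → i ≤ 3 * m → s i k ≤ propagationBound m q i) :
    ∀ i, 1 ≤ i → i ≤ 3 * m → s i (k + 1) ≤ propagationBound m q i := by
  obtain ⟨hother, hcenter⟩ := hstep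
  have hc₁ := le_icenter m r
  have hc₂ := icenter_le hm r
  intro i h1 h3
  by_cases hi : i = icenter m r
  · subst hi
    calc s (icenter m r) (k + 1) ≤ (Finset.Icc 1 (3 * m)).sup fun j => s j k := hcenter
      _ ≤ 2 * (r / m) + 1 := Finset.sup_le fun j hj =>
          (hr j (Finset.mem_Icc.1 hj).1 (Finset.mem_Icc.1 hj).2).trans (propagationBound_le j)
      _ ≤ propagationBound m q (icenter m r) :=
          two_mul_div_add_one_le_propagationBound_icenter hm hrq
  · have hc : s (icenter m r) k ≤ 2 * (r / m) :=
      (hr _ (by omega) (by omega)).trans_eq (propagationBound_icenter hm r)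
    exact (hother i h1 h3 hi).trans
      (max_le (hq i h1 h3) (hc.trans (two_mul_div_le_propagationBound hrq.le i)))

end step

/-- **Information-propagation lemma for the cyclic star construction (Lemma A.2).**
With `n = 3m`, `V₁ = {1,…,m}`, `V₂ = {m+1,…,2m}`, `V₃ = {2m+1,…,n}`: for every `q ∈ ℕ`,
every time step `k ≤ k_q`, and every node `i ∈ V`,
`s_i(k) ≤ 2⌊q/m⌋` if `i ∈ V₃` or `i_c(q) ≤ i ≤ 2m`, and `s_i(k) ≤ 2⌊q/m⌋ + 1` otherwise. -/
theorem information_propagation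
    (m : ℕ) (hm : 1 ≤ m)
    (c : ℕ → Bool) (K : ℕ → ℕ)
    (hK : ∀ q : ℕ, c (K q) = true ∧ qCount c (K q) = q)
    (s : ℕ → ℕ → ℕ)
    (hs0 : ∀ i, 1 ≤ i → i ≤ 3 * m → s i 0 = 0)
    (hcomp : ∀ k, c k = false →
      (∀ i, 1 ≤ i → i ≤ m → s i (k + 1) ≤ s i k + (1 - s i k % 2)) ∧
      (∀ i, m + 1 ≤ i → i ≤ 2 * m → s i (k + 1) ≤ s i k) ∧
      (∀ i, 2 * m + 1 ≤ i → i ≤ 3 * m → s i (k + 1) ≤ s i k + s i k % 2))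
    (hcomm : ∀ k, c k = true →
      (∀ i, 1 ≤ i → i ≤ 3 * m → i ≠ icenter m (qCount c k) →
        s i (k + 1) ≤ max (s i k) (s (icenter m (qCount c k)) k)) ∧
      s (icenter m (qCount c k)) (k + 1) ≤ (Finset.Icc 1 (3 * m)).sup fun j => s j k) :
    ∀ q k, k ≤ K q → ∀ i, 1 ≤ i → i ≤ 3 * m →
      s i k ≤ 2 * (q / m) +
        (if 2 * m + 1 ≤ i ∨ (icenter m q ≤ i ∧ i ≤ 2 * m) then 0 else 1) := by
  intro q k
  show k ≤ K q → ∀ i, 1 ≤ i → i ≤ 3 * m → s i k ≤ propagationBound m q i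
  induction k generalizing q with
  | zero => exact fun _ i h1 h3 => (hs0 i h1 h3).trans_le (Nat.zero_le _)
  | succ k ih =>
    intro hk
    cases hck : c k
    · exact le_propagationBound_succ_of_comp (hcomp k hck) (ih q (by omega))
    · have hrq : qCount c k < q := (hK q).2 ▸ qCount_lt_of_lt hck hk
      exact le_propagationBound_succ_of_comm hm (hcomm k hck) hrq
        (ih _ (K_qCount_eq hK hck).ge) (ih q (by omega))
end
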